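/- Let x̄ be feasible for (P) such that C(x̄) = {0}. Then x̄ is a strict local minimizer of (P), i.e., there is a neighborhood U of x̄ with f(x) > f(x̄) for all x ∈ (X ∩ U) \ {x̄}, and x̄ is M-stationary. -/

import Mathlib

open Filter Topology Metric Set
open scoped RealInnerProductSpace Pointwise

noncomputable section

/-- Euclidean space `ℝ^n`. -/
abbrev Eu (n : ℕ) := EuclideanSpace ℝ (Fin n)

section Cones

variable {H : Type*} [NormedAddCommGroup H] [InnerProductSpace ℝ H]

/-- Tangent (Bouligand) cone to `Ω` at `x` (empty if `x ∉ Ω`). -/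
def tanCone (Ω : Set H) (x : H) : Set H :=
  {d | x ∈ Ω ∧ ∃ (dk : ℕ → H) (tk : ℕ → ℝ),
    Tendsto dk atTop (𝓝 d) ∧ (∀ k, 0 < tk k) ∧ Tendsto tk atTop (𝓝 0) ∧
    ∀ k, x + tk k • dk k ∈ Ω}

/-- Polar cone of a set. -/
def polarCone (C : Set H) : Set H := {y | ∀ x ∈ C, ⟪x, y⟫ ≤ 0}

/-- Regular (Fréchet) normal cone: polar of the tangent cone (empty if `x ∉ Ω`). -/
def regNormal (Ω : Set H) (x : H) : Set H :=
  {η | x ∈ Ω ∧ η ∈ polarCone (tanCone Ω x)}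

/-- Limiting (Mordukhovich) normal cone (empty if `x ∉ Ω`). -/
def limNormal (Ω : Set H) (x : H) : Set H :=
  {η | x ∈ Ω ∧ ∃ (xk ηk : ℕ → H),
    Tendsto xk atTop (𝓝 x) ∧ Tendsto ηk atTop (𝓝 η) ∧
    ∀ k, ηk k ∈ regNormal Ω (xk k)}

/-- Directional limiting normal cone to `Ω` at `x` in direction `d`. -/
def dirLimNormal (Ω : Set H) (x d : H) : Set H :=
  {η | x ∈ Ω ∧ ∃ (dk : ℕ → H) (tk : ℕ → ℝ) (ηk : ℕ → H),
    Tendsto dk atTop (𝓝 d) ∧ (∀ k, 0 < tk k) ∧ Tendsto tk atTop (𝓝 0) ∧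
    Tendsto ηk atTop (𝓝 η) ∧
    ∀ k, ηk k ∈ regNormal Ω (x + tk k • dk k)}

/-- The pair `(ξ, r)` as an element of the ℓ²-product `H ×₂ ℝ`. -/
def pl2 (ξ : H) (r : ℝ) : WithLp 2 (H × ℝ) := (WithLp.equiv 2 (H × ℝ)).symm (ξ, r)

/-- Epigraph of `φ` as a subset of the ℓ²-product `H ×₂ ℝ`. -/
def epigraphSet (φ : H → ℝ) : Set (WithLp 2 (H × ℝ)) :=
  {p | φ ((WithLp.equiv 2 (H × ℝ)) p).1 ≤ ((WithLp.equiv 2 (H × ℝ)) p).2}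

/-- Limiting subdifferential of `φ` at `x`. -/
def limSubdiff (φ : H → ℝ) (x : H) : Set H :=
  {ξ | pl2 ξ (-1) ∈ limNormal (epigraphSet φ) (pl2 x (φ x))}

/-- Directional limiting subdifferential of `φ` at `x` in direction `d`, where `φd`
denotes the directional derivative `φ'(x; d)`. -/
def dirLimSubdiff (φ : H → ℝ) (x d : H) (φd : ℝ) : Set H :=
  {ξ | pl2 ξ (-1) ∈ dirLimNormal (epigraphSet φ) (pl2 x (φ x)) (pl2 d φd)}

/-- Directional neighborhood `B_{ε,δ}(d)`. -/
def dirNbhd (d : H) (ε δ : ℝ) : Set H :=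
  {y | ‖y‖ ≤ ε ∧ ‖‖d‖ • y - ‖y‖ • d‖ ≤ δ * (‖y‖ * ‖d‖)}

end Cones

section Problem

variable {n l : ℕ}

/-- `F' x d` is the directional derivative of `F` at `x` in direction `d`. -/
def IsDirDeriv (F : Eu n → Eu l) (F' : Eu n → Eu n → Eu l) : Prop :=
  ∀ x d : Eu n,
    Tendsto (fun t : ℝ => t⁻¹ • (F (x + t • d) - F x)) (𝓝[>] (0:ℝ)) (𝓝 (F' x d))

/-- Limiting subdifferential of the scalarization `⟨λ, F⟩` at `x`. -/
def scalSubdiff (F : Eu n → Eu l) (lam : Eu l) (x : Eu n) : Set (Eu n) :=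
  limSubdiff (fun y => ⟪lam, F y⟫) x

/-- Directional limiting subdifferential of `⟨λ, F⟩` at `x` in direction `d`. -/
def scalDirSubdiff (F : Eu n → Eu l) (F' : Eu n → Eu n → Eu l) (lam : Eu l)
    (x d : Eu n) : Set (Eu n) :=
  dirLimSubdiff (fun y => ⟪lam, F y⟫) x d ⟪lam, F' x d⟫

/-- Linearization cone. -/
def linCone (F : Eu n → Eu l) (F' : Eu n → Eu n → Eu l) (Γ : Set (Eu l)) (x : Eu n) :
    Set (Eu n) :=
  {d | F' x d ∈ tanCone Γ (F x)}

/-- Explicit critical cone `C(x̄)`. -/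
def critCone (f : Eu n → ℝ) (F : Eu n → Eu l) (F' : Eu n → Eu n → Eu l)
    (Γ : Set (Eu l)) (x : Eu n) : Set (Eu n) :=
  {d | ⟪gradient f x, d⟫ ≤ 0 ∧ d ∈ linCone F F' Γ x}

/-- Implicit critical cone `Ĉ(x̄)`. -/
def implCritCone (f : Eu n → ℝ) (F : Eu n → Eu l) (Γ : Set (Eu l)) (x : Eu n) :
    Set (Eu n) :=
  {d | ⟪gradient f x, d⟫ ≤ 0 ∧ d ∈ tanCone (F ⁻¹' Γ) x}

/-- M-stationarity. -/
def MStat (f : Eu n → ℝ) (F : Eu n → Eu l) (Γ : Set (Eu l)) (x : Eu n) : Prop :=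
  ∃ lam : Eu l, -gradient f x ∈ scalSubdiff F lam x ∧ lam ∈ limNormal Γ (F x)

/-- M-stationarity in direction `d`. -/
def MStatDir (f : Eu n → ℝ) (F : Eu n → Eu l) (F' : Eu n → Eu n → Eu l)
    (Γ : Set (Eu l)) (x d : Eu n) : Prop :=
  ∃ lam : Eu l, -gradient f x ∈ scalDirSubdiff F F' lam x d ∧
    lam ∈ dirLimNormal Γ (F x) (F' x d)

/-- Metric subregularity constraint qualification in direction `d`. -/
def MSCQdir (F : Eu n → Eu l) (Γ : Set (Eu l)) (x d : Eu n) : Prop :=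
  ∃ ε > (0:ℝ), ∃ δ > (0:ℝ), ∃ κ > (0:ℝ), ∀ y : Eu n, y - x ∈ dirNbhd d ε δ →
    infDist y (F ⁻¹' Γ) ≤ κ * infDist (F y) Γ

/-- Metric subregularity constraint qualification. -/
def MSCQ (F : Eu n → Eu l) (Γ : Set (Eu l)) (x : Eu n) : Prop := MSCQdir F Γ x 0

/-- AM-stationary sequence w.r.t. `x`. -/
def AMSeq (f : Eu n → ℝ) (F : Eu n → Eu l) (Γ : Set (Eu l)) (x : Eu n)
    (xk : ℕ → Eu n) (lamk δk : ℕ → Eu l) (εk : ℕ → Eu n) : Prop :=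
  (∀ k, εk k - gradient f (xk k) ∈ scalSubdiff F (lamk k) (xk k)) ∧
  (∀ k, lamk k ∈ limNormal Γ (F (xk k) - δk k)) ∧
  Tendsto xk atTop (𝓝 x) ∧ Tendsto δk atTop (𝓝 0) ∧ Tendsto εk atTop (𝓝 0)

/-- AM-stationarity. -/
def AMStat (f : Eu n → ℝ) (F : Eu n → Eu l) (Γ : Set (Eu l)) (x : Eu n) : Prop :=
  ∃ xk lamk δk εk, AMSeq f F Γ x xk lamk δk εk

/-- AM-stationary sequence w.r.t. `x` in direction `d`. -/
def AMSeqDir (f : Eu n → ℝ) (F : Eu n → Eu l) (Γ : Set (Eu l)) (x : Eu n)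
    (xk : ℕ → Eu n) (lamk δk : ℕ → Eu l) (εk : ℕ → Eu n) (d : Eu n) : Prop :=
  AMSeq f F Γ x xk lamk δk εk ∧
  (∀ k, xk k ≠ x) ∧
  Tendsto (fun k => ‖xk k - x‖⁻¹ • (xk k - x)) atTop (𝓝 d) ∧
  Tendsto (fun k => ‖xk k - x‖⁻¹ • δk k) atTop (𝓝 (0 : Eu l)) ∧
  (∃ θ : ℕ → ℝ, (∀ k, 0 ≤ θ k) ∧ Tendsto θ atTop (𝓝 0) ∧
    ∀ k, ‖‖δk k‖ • lamk k - ‖lamk k‖ • δk k‖ ≤ ‖δk k‖ * ‖lamk k‖ * θ k) ∧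
  (∃ M : ℝ, ∀ k, ‖δk k‖ * ‖lamk k‖ / ‖xk k - x‖ ≤ M)

/-- AM-stationarity in direction `d`. -/
def AMStatDir (f : Eu n → ℝ) (F : Eu n → Eu l) (Γ : Set (Eu l)) (x d : Eu n) : Prop :=
  ∃ xk lamk δk εk, AMSeqDir f F Γ x xk lamk δk εk d

/-- The Minkowski sum `Σ_i |λ_i| ∂(sgn(λ_i) F_i)(x; d)`. -/
def dirSumSet (F : Eu n → Eu l) (F' : Eu n → Eu n → Eu l) (lam : Eu l) (x d : Eu n) :
    Set (Eu n) :=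
  {v | ∃ s : Fin l → Eu n,
    (∀ i, s i ∈ |lam i| • dirLimSubdiff (fun y => Real.sign (lam i) * F y i) x d
        (Real.sign (lam i) * F' x d i)) ∧
    v = ∑ i, s i}

/-- Standing sum-rule assumption. -/
def SumRule (F : Eu n → Eu l) (F' : Eu n → Eu n → Eu l) : Prop :=
  ∀ (x d : Eu n) (lam : Eu l), scalDirSubdiff F F' lam x d = dirSumSet F F' lam x d

end Problem

/-!
If `x̄` were not a strict local minimizer, feasible points `yₖ → x̄`, `yₖ ≠ x̄`, with
`f yₖ ≤ f x̄` would produce, after normalising `yₖ - x̄`, a unit vector `d` with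
`⟨∇f(x̄), d⟩ ≤ 0` (differentiability of `f`) and `F'(x̄; d) ∈ T_Γ(F x̄)` (Lipschitz continuity
and directional differentiability of `F`), i.e. a nonzero element of `C(x̄)`.

For M-stationarity, minimize `f y + (k+1)/2 ‖F y - z‖² + ‖y - x̄‖²` over
`(y, z) ∈ B(x̄, ρ) × (Γ ∩ B(F x̄, 1))`. Strict local minimality forces the minimizers
`(yₖ, zₖ) → (x̄, F x̄)`, and `λₖ = (k+1)(F yₖ - zₖ)` is a regular normal to `Γ` at `zₖ`.
If `‖λₖ‖ → ∞`, the estimate `‖F yₖ - zₖ‖ ‖λₖ‖ ≤ 2 L ‖yₖ - x̄‖` makes `zₖ ∈ Γ` a first-order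
approximation of `F yₖ`, and the first argument yields a nonzero critical direction again.
Hence some subsequence `λₖ → λ ∈ N_Γ(F x̄)`. Minimality in `y` makes `-∇f(yₖ) - 2 (yₖ - x̄)`
an approximate proximal subgradient of `⟨λ, F⟩` at `yₖ` with vanishing errors, and minimizing
a quadratically shifted `⟨λ, F⟩` on a small ball around `yₖ` turns it into an exact regular
subgradient at a nearby point; in the limit `-∇f(x̄) ∈ ∂⟨λ, F⟩(x̄)`.
-/

section NormalCones

variable {H : Type*} [NormedAddCommGroup H] [InnerProductSpace ℝ H]

theorem norm_sub_sq_eq_norm_sub_sq_add (a b c : H) :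
    ‖a - c‖ ^ 2 = ‖a - b‖ ^ 2 + 2 * ⟪b - c, a - b⟫ + ‖b - c‖ ^ 2 := by
  rw [← sub_add_sub_cancel a b c, norm_add_sq_real, real_inner_comm]

theorem mem_regNormal_of_eventually_inner_le {Ω : Set H} {z η : H} {a : ℝ} (hz : z ∈ Ω)
    (h : ∀ᶠ p in 𝓝 z, p ∈ Ω → ⟪η, p - z⟫ ≤ a * ‖p - z‖ ^ 2) : η ∈ regNormal Ω z := by
  refine ⟨hz, fun v ⟨_, d, t, hd, ht0, ht, hmem⟩ => ?_⟩
  have hp : Tendsto (fun k => z + t k • d k) atTop (𝓝 z) := by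
    simpa using tendsto_const_nhds.add (ht.smul hd)
  have hle : ∀ᶠ k in atTop, ⟪η, d k⟫ ≤ a * t k * ‖d k‖ ^ 2 := by
    filter_upwards [hp.eventually h] with k hk
    have hineq := hk (hmem k)
    rw [add_sub_cancel_left, real_inner_smul_right, norm_smul, Real.norm_eq_abs,
      abs_of_pos (ht0 k)] at hineq
    refine le_of_mul_le_mul_left ?_ (ht0 k)
    linarith [show a * (t k * ‖d k‖) ^ 2 = t k * (a * t k * ‖d k‖ ^ 2) by ring]
  have hlim : Tendsto (fun k => a * t k * ‖d k‖ ^ 2) atTop (𝓝 0) := by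
    simpa using ((ht.const_mul a).mul (hd.norm.pow 2))
  rw [real_inner_comm]
  exact le_of_tendsto_of_tendsto ((tendsto_const_nhds (x := η)).inner hd) hlim hle

theorem smul_mem_regNormal {Ω : Set H} {z η : H} {c : ℝ} (hc : 0 ≤ c)
    (hη : η ∈ regNormal Ω z) : c • η ∈ regNormal Ω z :=
  ⟨hη.1, fun v hv => by
    rw [real_inner_smul_right]; exact mul_nonpos_of_nonneg_of_nonpos hc (hη.2 v hv)⟩

theorem sub_mem_regNormal_of_eventually_norm_le {Ω : Set H} {z u : H} (hz : z ∈ Ω)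
    (h : ∀ᶠ p in 𝓝 z, p ∈ Ω → ‖u - z‖ ≤ ‖u - p‖) : u - z ∈ regNormal Ω z := by
  refine mem_regNormal_of_eventually_inner_le (a := 1 / 2) hz ?_
  filter_upwards [h] with p hp hpΩ
  have hsq := pow_le_pow_left₀ (norm_nonneg _) (hp hpΩ) 2
  have hexp : ‖u - p‖ ^ 2 = ‖u - z‖ ^ 2 - 2 * ⟪u - z, p - z⟫ + ‖p - z‖ ^ 2 := by
    rw [← norm_sub_sq_real, sub_sub_sub_cancel_right]
  linarith

theorem mem_limNormal_of_tendsto {Ω : Set H} {z η : H} {zk ηk : ℕ → H} (hz : z ∈ Ω)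
    (hzk : Tendsto zk atTop (𝓝 z)) (hηk : Tendsto ηk atTop (𝓝 η))
    (h : ∀ᶠ k in atTop, ηk k ∈ regNormal Ω (zk k)) : η ∈ limNormal Ω z := by
  obtain ⟨N, hN⟩ := eventually_atTop.1 h
  exact ⟨hz, fun k => zk (k + N), fun k => ηk (k + N), hzk.comp (tendsto_add_atTop_nat N),
    hηk.comp (tendsto_add_atTop_nat N), fun k => hN _ (Nat.le_add_left N k)⟩

end NormalCones

section Subdifferential

theorem tendsto_pl2 {H α : Type*} [TopologicalSpace H] {l : Filter α} {a : α → H} {b : α → ℝ}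
    {a₀ : H} {b₀ : ℝ}
    (ha : Tendsto a l (𝓝 a₀)) (hb : Tendsto b l (𝓝 b₀)) :
    Tendsto (fun k => pl2 (a k) (b k)) l (𝓝 (pl2 a₀ b₀)) :=
  ((WithLp.prod_continuous_toLp 2 H ℝ).tendsto (a₀, b₀)).comp (ha.prodMk_nhds hb)

variable {H : Type*} [NormedAddCommGroup H] [InnerProductSpace ℝ H]

theorem pl2_mem_regNormal_epigraphSet {φ : H → ℝ} {w ξ : H} {a : ℝ} (ha : 0 ≤ a)
    (h : ∀ᶠ y in 𝓝 w, φ w + ⟪ξ, y - w⟫ - a * ‖y - w‖ ^ 2 ≤ φ y) :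
    pl2 ξ (-1) ∈ regNormal (epigraphSet φ) (pl2 w (φ w)) := by
  refine mem_regNormal_of_eventually_inner_le (a := a) (le_refl (φ w)) ?_
  have hfst : Tendsto WithLp.fst (𝓝 (pl2 w (φ w))) (𝓝 w) :=
    (WithLp.continuous_fst 2 H ℝ).tendsto _
  filter_upwards [hfst.eventually h] with p hp hpepi
  have hnorm : ‖p.fst - w‖ ^ 2 ≤ ‖p - pl2 w (φ w)‖ ^ 2 := by
    rw [WithLp.prod_norm_sq_eq_of_L2]
    exact le_add_of_nonneg_right (sq_nonneg _)
  have hinner : ⟪pl2 ξ (-1), p - pl2 w (φ w)⟫ = ⟪ξ, p.fst - w⟫ - (p.snd - φ w) := by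
    simp [WithLp.prod_inner_apply, pl2]
    ring
  have hepi : φ p.fst ≤ p.snd := hpepi
  rw [hinner]
  nlinarith [mul_le_mul_of_nonneg_left hnorm ha]

theorem mem_limSubdiff_of_tendsto {φ : H → ℝ} (hφ : Continuous φ) {x ξ : H} {w ξk : ℕ → H}
    (hw : Tendsto w atTop (𝓝 x)) (hξ : Tendsto ξk atTop (𝓝 ξ))
    (h : ∀ᶠ k in atTop, pl2 (ξk k) (-1) ∈ regNormal (epigraphSet φ) (pl2 (w k) (φ (w k)))) :
    ξ ∈ limSubdiff φ x :=
  mem_limNormal_of_tendsto (le_refl (φ x)) (tendsto_pl2 hw ((hφ.tendsto x).comp hw))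
    (tendsto_pl2 hξ tendsto_const_nhds) h

end Subdifferential

section ApproximateSubgradients

variable {H : Type*} [NormedAddCommGroup H] [InnerProductSpace ℝ H] [ProperSpace H]

theorem exists_pl2_mem_regNormal_epigraphSet_near {φ : H → ℝ} (hφ : Continuous φ)
    {y ξ : H} {r B a : ℝ} (hr : 0 < r) (hB : 0 < B) (ha : 0 ≤ a)
    (h : ∀ z ∈ closedBall y r, φ y + ⟪ξ, z - y⟫ - B * ‖z - y‖ - a * ‖z - y‖ ^ 2 ≤ φ z) :
    ∃ w ∈ ball y r, ∃ ξ', ‖ξ' - ξ‖ ≤ 2 * a * r + 4 * B ∧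
      pl2 ξ' (-1) ∈ regNormal (epigraphSet φ) (pl2 w (φ w)) := by
  set A := a + 2 * B / r with hAdef
  have hA : 0 ≤ A := by positivity
  have hArr : A * r ^ 2 = a * r ^ 2 + 2 * (B * r) := by
    rw [hAdef]; field_simp
  have hBr := mul_pos hB hr
  obtain ⟨w, hw, hwmin⟩ := (isCompact_closedBall y r).exists_isMinOn
    (nonempty_closedBall.2 hr.le)
    (by fun_prop : Continuous fun z => φ z - ⟪ξ, z - y⟫ + A * ‖z - y‖ ^ 2).continuousOn
  -- `A` is chosen so that `A r² = a r² + 2 B r`: on the sphere of radius `r` the minimized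
  -- function exceeds its value at `y` by `B r > 0`, so the minimum is attained inside the ball.
  have hwy : w ∈ ball y r := by
    refine mem_ball.2 (lt_of_le_of_ne (mem_closedBall.1 hw) fun hwr => ?_)
    have hmin : φ w - ⟪ξ, w - y⟫ + A * ‖w - y‖ ^ 2 ≤ φ y := by
      simpa using hwmin (mem_closedBall_self hr.le)
    have hlow := h w hw
    rw [dist_eq_norm] at hwr
    rw [hwr] at hmin hlow
    linarith
  refine ⟨w, hwy, ξ - (2 * A) • (w - y), ?_, pl2_mem_regNormal_epigraphSet hA ?_⟩
  · rw [sub_sub_cancel_left, norm_neg, norm_smul, Real.norm_of_nonneg (by positivity)]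
    have hwr : ‖w - y‖ ≤ r := (mem_closedBall_iff_norm).1 hw
    calc 2 * A * ‖w - y‖ ≤ 2 * A * r := by gcongr
      _ = 2 * a * r + 4 * B := by rw [hAdef]; field_simp; ring
  · filter_upwards [isOpen_ball.mem_nhds hwy] with z hz
    have hmin : φ w - ⟪ξ, w - y⟫ + A * ‖w - y‖ ^ 2 ≤ φ z - ⟪ξ, z - y⟫ + A * ‖z - y‖ ^ 2 :=
      hwmin (ball_subset_closedBall hz)
    have hzy := norm_sub_sq_eq_norm_sub_sq_add z w y
    have hξ : ⟪ξ, z - y⟫ = ⟪ξ, z - w⟫ + ⟪ξ, w - y⟫ := by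
      rw [← inner_add_right, sub_add_sub_cancel]
    rw [inner_sub_left, real_inner_smul_left]
    linear_combination hmin + A * hzy - hξ

theorem mem_limSubdiff_of_approx {φ : H → ℝ} (hφ : Continuous φ) {x ξ : H}
    {y ξk : ℕ → H} {B a : ℕ → ℝ} (hy : Tendsto y atTop (𝓝 x)) (hξ : Tendsto ξk atTop (𝓝 ξ))
    (hB0 : ∀ k, 0 ≤ B k) (hB : Tendsto B atTop (𝓝 0)) (ha : ∀ k, 0 ≤ a k)
    (h : ∀ᶠ k in atTop, ∀ᶠ z in 𝓝 (y k),
      φ (y k) + ⟪ξk k, z - y k⟫ - B k * ‖z - y k‖ - a k * ‖z - y k‖ ^ 2 ≤ φ z) :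
    ξ ∈ limSubdiff φ x := by
  set ε : ℕ → ℝ := fun k => 1 / ((k : ℝ) + 1)
  have hε0 : ∀ k, 0 < ε k := fun k => by positivity
  have hε : Tendsto ε atTop (𝓝 0) := tendsto_one_div_add_atTop_nhds_zero_nat
  have hsel : ∀ k, (∀ᶠ z in 𝓝 (y k),
      φ (y k) + ⟪ξk k, z - y k⟫ - B k * ‖z - y k‖ - a k * ‖z - y k‖ ^ 2 ≤ φ z) →
      ∃ w ξ', ‖w - y k‖ ≤ ε k ∧ ‖ξ' - ξk k‖ ≤ 6 * ε k + 4 * B k ∧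
        pl2 ξ' (-1) ∈ regNormal (epigraphSet φ) (pl2 w (φ w)) := by
    intro k hk
    obtain ⟨δ, hδ, hball⟩ := Metric.eventually_nhds_iff_ball.1 hk
    set r := min (δ / 2) (ε k / (a k + 1))
    have hr : 0 < r := lt_min (by positivity) (div_pos (hε0 k) (by linarith [ha k]))
    have hrε : a k * r ≤ ε k ∧ r ≤ ε k := by
      have h1 : r * (a k + 1) ≤ ε k :=
        (le_div_iff₀ (by linarith [ha k])).1 (min_le_right _ _)
      constructor <;> nlinarith [ha k]
    obtain ⟨w, hw, ξ', hξ', hreg⟩ := exists_pl2_mem_regNormal_epigraphSet_near hφ hr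
      (add_pos_of_nonneg_of_pos (hB0 k) (hε0 k)) (ha k) fun z hz => by
        have hzδ : z ∈ ball (y k) δ :=
          closedBall_subset_ball (by linarith [min_le_left (δ / 2) (ε k / (a k + 1))]) hz
        nlinarith [hball z hzδ, norm_nonneg (z - y k), hε0 k]
    exact ⟨w, ξ', (mem_ball_iff_norm.1 hw).le.trans hrε.2, by nlinarith [hrε.1], hreg⟩
  choose! w ξ' hw using hsel
  have hlim : ∀ᶠ k in atTop, ‖w k - y k‖ ≤ ε k ∧ ‖ξ' k - ξk k‖ ≤ 6 * ε k + 4 * B k ∧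
      pl2 (ξ' k) (-1) ∈ regNormal (epigraphSet φ) (pl2 (w k) (φ (w k))) :=
    h.mono hw
  have hwy : Tendsto (fun k => w k - y k) atTop (𝓝 0) :=
    squeeze_zero_norm' (hlim.mono fun k hk => hk.1) hε
  have hξξ : Tendsto (fun k => ξ' k - ξk k) atTop (𝓝 0) := by
    refine squeeze_zero_norm' (hlim.mono fun k hk => hk.2.1) ?_
    simpa using (hε.const_mul 6).add (hB.const_mul 4)
  refine mem_limSubdiff_of_tendsto hφ ?_ ?_ (hlim.mono fun k hk => hk.2.2)
  · simpa using hwy.add hy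
  · simpa using hξξ.add hξ

end ApproximateSubgradients

section CriticalCone

variable {n l : ℕ} {f : Eu n → ℝ} {F : Eu n → Eu l} {F' : Eu n → Eu n → Eu l}
  {Γ : Set (Eu l)} {x : Eu n}

theorem IsDirDeriv.tendsto_of_locallyLipschitz (hF' : IsDirDeriv F F') (hF : LocallyLipschitz F)
    {α : Type*} {L : Filter α} {t : α → ℝ} {u : α → Eu n} {d : Eu n}
    (ht : Tendsto t L (𝓝[>] 0)) (hu : Tendsto u L (𝓝 d)) :
    Tendsto (fun k => (t k)⁻¹ • (F (x + t k • u k) - F x)) L (𝓝 (F' x d)) := by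
  obtain ⟨K, s, hs, hK⟩ := hF x
  obtain ⟨ht0, htpos⟩ := tendsto_nhdsWithin_iff.1 ht
  have hnear : ∀ {v : α → Eu n}, Tendsto v L (𝓝 d) → ∀ᶠ k in L, x + t k • v k ∈ s :=
    fun hv => (by simpa using tendsto_const_nhds.add (ht0.smul hv) :
      Tendsto (fun k => x + t k • _) L (𝓝 x)).eventually hs
  have hdiff : Tendsto (fun k => (t k)⁻¹ • (F (x + t k • u k) - F (x + t k • d))) L (𝓝 0) := by
    refine squeeze_zero_norm' ?_ (by simpa using ((hu.sub_const d).norm.const_mul (K : ℝ)))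
    filter_upwards [hnear hu, hnear tendsto_const_nhds, htpos] with k hku hkd hk
    rw [norm_smul, norm_inv, Real.norm_of_nonneg hk.le, inv_mul_le_iff₀ hk, ← dist_eq_norm]
    calc dist (F (x + t k • u k)) (F (x + t k • d))
        ≤ K * dist (x + t k • u k) (x + t k • d) := hK.dist_le_mul _ hku _ hkd
      _ = t k * (K * ‖u k - d‖) := by
        rw [dist_add_left, dist_eq_norm, ← smul_sub, norm_smul, Real.norm_of_nonneg hk.le]
        ring
  have hsum := hdiff.add ((hF' x d).comp ht)
  rw [zero_add] at hsum
  exact hsum.congr fun k => by simp only [Function.comp_apply, ← smul_add, sub_add_sub_cancel]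

theorem mem_critCone_of_tendsto (hf : DifferentiableAt ℝ f x) (hF' : IsDirDeriv F F')
    (hF : LocallyLipschitz F) (hx : F x ∈ Γ) {t : ℕ → ℝ} {u : ℕ → Eu n} {p : ℕ → Eu l}
    {d : Eu n} (ht0 : ∀ k, 0 < t k) (ht : Tendsto t atTop (𝓝 0)) (hu : Tendsto u atTop (𝓝 d))
    (hfle : ∀ k, f (x + t k • u k) ≤ f x) (hp : ∀ k, p k ∈ Γ)
    (hpF : Tendsto (fun k => (t k)⁻¹ • (p k - F (x + t k • u k))) atTop (𝓝 0)) :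
    d ∈ critCone f F F' Γ x := by
  have htu : Tendsto (fun k => t k • u k) atTop (𝓝 0) := by simpa using ht.smul hu
  have hcu : Tendsto (fun k => (t k)⁻¹ • (t k • u k)) atTop (𝓝 d) :=
    hu.congr fun k => (inv_smul_smul₀ (ht0 k).ne' _).symm
  refine ⟨?_, hx, fun k => (t k)⁻¹ • (p k - F x), t, ?_, ht0, ht, fun k => ?_⟩
  · have hlim := hf.hasGradientAt.hasFDerivAt.hasFDerivWithinAt (s := univ).lim htu
      (.of_forall fun _ => mem_univ _) hcu
    rw [InnerProductSpace.toDual_apply_apply] at hlim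
    refine le_of_tendsto' hlim fun k => ?_
    rw [smul_eq_mul]
    exact mul_nonpos_of_nonneg_of_nonpos (inv_pos.2 (ht0 k)).le (sub_nonpos.2 (hfle k))
  · have hsum := hpF.add (hF'.tendsto_of_locallyLipschitz (x := x) hF
      (tendsto_nhdsWithin_iff.2 ⟨ht, .of_forall ht0⟩) hu)
    rw [zero_add] at hsum
    exact hsum.congr fun k => by rw [← smul_add, sub_add_sub_cancel]
  · rw [smul_inv_smul₀ (ht0 k).ne', add_sub_cancel]
    exact hp k

theorem exists_ne_zero_mem_critCone (hf : DifferentiableAt ℝ f x) (hF' : IsDirDeriv F F')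
    (hF : LocallyLipschitz F) (hx : F x ∈ Γ) {y : ℕ → Eu n} {p : ℕ → Eu l}
    (hy : Tendsto y atTop (𝓝 x)) (hyx : ∀ k, y k ≠ x) (hfle : ∀ k, f (y k) ≤ f x)
    (hp : ∀ k, p k ∈ Γ)
    (hpF : Tendsto (fun k => ‖y k - x‖⁻¹ • (p k - F (y k))) atTop (𝓝 0)) :
    ∃ d ≠ 0, d ∈ critCone f F F' Γ x := by
  set t : ℕ → ℝ := fun k => ‖y k - x‖
  have ht0 : ∀ k, 0 < t k := fun k => norm_sub_pos_iff.2 (hyx k)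
  have ht : Tendsto t atTop (𝓝 0) := by simpa using (tendsto_sub_nhds_zero_iff.2 hy).norm
  have hyt : ∀ k, x + t k • ((t k)⁻¹ • (y k - x)) = y k := fun k => by
    rw [smul_inv_smul₀ (ht0 k).ne', add_sub_cancel]
  obtain ⟨d, hd, φ, hφ, hu⟩ := (isCompact_sphere (0 : Eu n) 1).tendsto_subseq
    (x := fun k => (t k)⁻¹ • (y k - x)) fun k => by
      rw [mem_sphere_zero_iff_norm, norm_smul, norm_inv, norm_norm, inv_mul_cancel₀ (ht0 k).ne']
  refine ⟨d, fun h => by simp [h] at hd, mem_critCone_of_tendsto hf hF' hF hx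
    (fun k => ht0 (φ k)) (ht.comp hφ.tendsto_atTop) hu (fun k => ?_) (fun k => hp (φ k)) ?_⟩
  · simpa only [Function.comp_apply, hyt] using hfle (φ k)
  · simpa only [Function.comp_def, hyt] using hpF.comp hφ.tendsto_atTop

theorem eventually_lt_of_critCone_eq_zero (hf : DifferentiableAt ℝ f x)
    (hF' : IsDirDeriv F F') (hF : LocallyLipschitz F) (hx : F x ∈ Γ)
    (hC : critCone f F F' Γ x = {0}) :
    ∀ᶠ y in 𝓝 x, y ∈ F ⁻¹' Γ → y ≠ x → f x < f y := by
  by_contra hcon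
  simp only [not_eventually, Classical.not_imp, not_lt] at hcon
  obtain ⟨y, hy, hyP⟩ := exists_seq_forall_of_frequently hcon
  obtain ⟨d, hd0, hd⟩ := exists_ne_zero_mem_critCone hf hF' hF hx (p := fun k => F (y k)) hy
    (fun k => (hyP k).2.1) (fun k => (hyP k).2.2) (fun k => (hyP k).1) (by simp)
  exact hd0 (by simpa [hC] using hd)

end CriticalCone

section Penalty

variable {E G : Type*} [NormedAddCommGroup E] [NormedAddCommGroup G]

def penalty (f : E → ℝ) (F : E → G) (x : E) (c : ℝ) (y : E) (z : G) : ℝ :=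
  f y + c / 2 * ‖F y - z‖ ^ 2 + ‖y - x‖ ^ 2

structure IsPenaltyMinimizerSeq (f : E → ℝ) (F : E → G) (Γ : Set G) (x : E) (ρ : ℝ)
    (y : ℕ → E) (z : ℕ → G) : Prop where
  mem : ∀ k, (y k, z k) ∈ closedBall x ρ ×ˢ (Γ ∩ closedBall (F x) 1)
  le : ∀ (k : ℕ), ∀ q ∈ closedBall x ρ ×ˢ (Γ ∩ closedBall (F x) 1),
    penalty f F x (k + 1) (y k) (z k) ≤ penalty f F x (k + 1) q.1 q.2

theorem le_of_penalty_le {f : E → ℝ} {F : E → G} {x : E} {c : ℝ} {y₀ : E} {z₀ : G} (hc : 0 ≤ c)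
    (h : penalty f F x c y₀ z₀ ≤ f x) : f y₀ + ‖y₀ - x‖ ^ 2 ≤ f x := by
  unfold penalty at h
  nlinarith [sq_nonneg ‖F y₀ - z₀‖]

theorem exists_isPenaltyMinimizerSeq [ProperSpace E] [ProperSpace G] {f : E → ℝ} {F : E → G}
    (hf : Continuous f) (hF : Continuous F) {Γ : Set G} (hΓ : IsClosed Γ) {x : E}
    (hx : F x ∈ Γ) {ρ : ℝ} (hρ : 0 ≤ ρ) : ∃ y z, IsPenaltyMinimizerSeq f F Γ x ρ y z := by
  have hS : IsCompact (closedBall x ρ ×ˢ (Γ ∩ closedBall (F x) 1)) :=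
    (isCompact_closedBall x ρ).prod ((isCompact_closedBall _ _).inter_left hΓ)
  have hmin := fun k : ℕ => hS.exists_isMinOn
    ⟨(x, F x), mem_closedBall_self hρ, hx, mem_closedBall_self zero_le_one⟩
    (f := fun q => penalty f F x (k + 1) q.1 q.2)
    (by unfold penalty; fun_prop : Continuous fun q : E × G => _).continuousOn
  choose q hq hqmin using hmin
  exact ⟨fun k => (q k).1, fun k => (q k).2, ⟨hq, fun k _ hq' => hqmin k hq'⟩⟩

namespace IsPenaltyMinimizerSeq

variable {f : E → ℝ} {F : E → G} {Γ : Set G} {x : E} {ρ : ℝ} {y : ℕ → E} {z : ℕ → G}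

theorem penalty_le (h : IsPenaltyMinimizerSeq f F Γ x ρ y z) (hx : F x ∈ Γ) (k : ℕ) :
    penalty f F x (k + 1) (y k) (z k) ≤ f x := by
  have hρ : 0 ≤ ρ := nonempty_closedBall.1 ⟨_, (h.mem k).1⟩
  simpa [penalty] using
    h.le k (x, F x) ⟨mem_closedBall_self hρ, hx, mem_closedBall_self zero_le_one⟩

theorem tendsto_sub [ProperSpace E] (h : IsPenaltyMinimizerSeq f F Γ x ρ y z)
    (hf : Continuous f) (hx : F x ∈ Γ) :
    Tendsto (fun k => F (y k) - z k) atTop (𝓝 0) := by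
  obtain ⟨m, hm⟩ := (isCompact_closedBall x ρ).bddBelow_image hf.continuousOn
  have hbound : ∀ k, ‖F (y k) - z k‖ ^ 2 ≤ 2 * (f x - m) * (1 / ((k : ℝ) + 1)) := by
    intro k
    have hk := h.penalty_le hx k
    have hm' : m ≤ f (y k) := hm (mem_image_of_mem f (h.mem k).1)
    unfold penalty at hk
    rw [mul_one_div, le_div_iff₀ (by positivity)]
    nlinarith [sq_nonneg ‖y k - x‖]
  have hsq : Tendsto (fun k => ‖F (y k) - z k‖ ^ 2) atTop (𝓝 0) :=
    squeeze_zero (fun k => by positivity) hbound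
      (by simpa using tendsto_one_div_add_atTop_nhds_zero_nat.const_mul (2 * (f x - m)))
  refine tendsto_zero_iff_norm_tendsto_zero.2 ?_
  simpa [Real.sqrt_sq (norm_nonneg _)] using hsq.sqrt

theorem tendsto_fst [ProperSpace E] (h : IsPenaltyMinimizerSeq f F Γ x ρ y z)
    (hf : Continuous f) (hF : Continuous F) (hΓ : IsClosed Γ) (hx : F x ∈ Γ)
    (hmin : ∀ y ∈ closedBall x ρ, F y ∈ Γ → y ≠ x → f x < f y) :
    Tendsto y atTop (𝓝 x) := by
  refine (isCompact_closedBall x ρ).tendsto_nhds_of_unique_mapClusterPt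
    (.of_forall fun k => (h.mem k).1) fun q hq hclus => ?_
  obtain ⟨ψ, hψ, hyq⟩ := hclus.tendsto_subseq
  have hzq : Tendsto (z ∘ ψ) atTop (𝓝 (F q)) := by
    simpa [Function.comp_def] using
      ((hF.tendsto q).comp hyq).sub ((h.tendsto_sub hf hx).comp hψ.tendsto_atTop)
  have hFq : F q ∈ Γ := hΓ.mem_of_tendsto hzq (.of_forall fun k => (h.mem (ψ k)).2.1)
  have hfq : f q + ‖q - x‖ ^ 2 ≤ f x :=
    le_of_tendsto' (((hf.tendsto q).comp hyq).add ((hyq.sub_const x).norm.pow 2))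
      fun k => le_of_penalty_le (by positivity) (h.penalty_le hx (ψ k))
  by_contra hqx
  nlinarith [hmin q hq hFq hqx, sq_nonneg ‖q - x‖]

theorem tendsto_snd [ProperSpace E] (h : IsPenaltyMinimizerSeq f F Γ x ρ y z)
    (hf : Continuous f) (hF : Continuous F) (hΓ : IsClosed Γ) (hx : F x ∈ Γ)
    (hmin : ∀ y ∈ closedBall x ρ, F y ∈ Γ → y ≠ x → f x < f y) :
    Tendsto z atTop (𝓝 (F x)) := by
  simpa using ((hF.tendsto x).comp (h.tendsto_fst hf hF hΓ hx hmin)).sub (h.tendsto_sub hf hx)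

theorem smul_sub_mem_regNormal [InnerProductSpace ℝ G]
    (h : IsPenaltyMinimizerSeq f F Γ x ρ y z) {k : ℕ} (hk : z k ∈ ball (F x) 1) :
    ((k : ℝ) + 1) • (F (y k) - z k) ∈ regNormal Γ (z k) := by
  refine smul_mem_regNormal (by positivity)
    (sub_mem_regNormal_of_eventually_norm_le (h.mem k).2.1 ?_)
  filter_upwards [isOpen_ball.mem_nhds hk] with w hw hwΓ
  have hle := h.le k (y k, w) ⟨(h.mem k).1, hwΓ, ball_subset_closedBall hw⟩
  unfold penalty at hle
  refine (sq_le_sq₀ (norm_nonneg _) (norm_nonneg _)).1 ?_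
  nlinarith [show (0 : ℝ) < (k + 1) / 2 by positivity]

theorem norm_sub_mul_norm_smul_sub_le [NormedSpace ℝ G] (h : IsPenaltyMinimizerSeq f F Γ x ρ y z)
    (hx : F x ∈ Γ) {L : NNReal} (hf : LipschitzOnWith L f (closedBall x ρ)) (k : ℕ) :
    ‖F (y k) - z k‖ * ‖((k : ℝ) + 1) • (F (y k) - z k)‖ ≤ 2 * L * ‖y k - x‖ := by
  have hρ : 0 ≤ ρ := nonempty_closedBall.1 ⟨_, (h.mem k).1⟩
  have hk := h.penalty_le hx k
  have hLf : f x - f (y k) ≤ L * ‖y k - x‖ := by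
    have hdist := hf.dist_le_mul x (mem_closedBall_self hρ) (y k) (h.mem k).1
    rw [Real.dist_eq, dist_eq_norm, norm_sub_rev] at hdist
    exact (le_abs_self _).trans hdist
  unfold penalty at hk
  rw [norm_smul, Real.norm_of_nonneg (by positivity)]
  nlinarith [sq_nonneg ‖y k - x‖]

theorem inner_lower_estimate [InnerProductSpace ℝ E] [InnerProductSpace ℝ G]
    (h : IsPenaltyMinimizerSeq f F Γ x ρ y z) {K : NNReal}
    (hF : LipschitzOnWith K F (closedBall x ρ)) (k : ℕ) (μ : G) {g w : E} {σ : ℝ}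
    (hw : w ∈ closedBall x ρ) (hσ : ‖f w - f (y k) - ⟪g, w - y k⟫‖ ≤ σ * ‖w - y k‖) :
    ⟪μ, F (y k)⟫ + ⟪-g - (2 : ℝ) • (y k - x), w - y k⟫
      - (K * ‖μ - ((k : ℝ) + 1) • (F (y k) - z k)‖ + σ) * ‖w - y k‖
      - (((k : ℝ) + 1) * K ^ 2 / 2 + 1) * ‖w - y k‖ ^ 2 ≤ ⟪μ, F w⟫ := by
  set c : ℝ := (k : ℝ) + 1
  have hc : 0 ≤ c := by positivity
  have hle := h.le k (w, z k) ⟨hw, (h.mem k).2⟩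
  unfold penalty at hle
  dsimp only at hle
  rw [norm_sub_sq_eq_norm_sub_sq_add (F w) (F (y k)), norm_sub_sq_eq_norm_sub_sq_add w (y k)]
    at hle
  have hLip : ‖F w - F (y k)‖ ≤ K * ‖w - y k‖ := by
    simpa [dist_eq_norm] using hF.dist_le_mul w hw (y k) (h.mem k).1
  have hLip2 : c * ‖F w - F (y k)‖ ^ 2 ≤ c * (K ^ 2 * ‖w - y k‖ ^ 2) := by
    rw [← mul_pow]
    exact mul_le_mul_of_nonneg_left (pow_le_pow_left₀ (norm_nonneg _) hLip 2) hc
  have hpert : -(K * ‖μ - c • (F (y k) - z k)‖ * ‖w - y k‖) ≤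
      ⟪μ - c • (F (y k) - z k), F w - F (y k)⟫ := by
    have hcs := abs_real_inner_le_norm (μ - c • (F (y k) - z k)) (F w - F (y k))
    have hK := mul_le_mul_of_nonneg_left hLip (norm_nonneg (μ - c • (F (y k) - z k)))
    linarith [neg_abs_le ⟪μ - c • (F (y k) - z k), F w - F (y k)⟫]
  have hsplit : ⟪μ, F w⟫ - ⟪μ, F (y k)⟫ =
      c * ⟪F (y k) - z k, F w - F (y k)⟫ + ⟪μ - c • (F (y k) - z k), F w - F (y k)⟫ := by
    simp only [inner_sub_left, inner_sub_right, real_inner_smul_left]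
    ring
  have htaylor := le_of_abs_le (Real.norm_eq_abs _ ▸ hσ)
  have hξ : ⟪-g - (2 : ℝ) • (y k - x), w - y k⟫ = -⟪g, w - y k⟫ - 2 * ⟪y k - x, w - y k⟫ := by
    rw [inner_sub_left, inner_neg_left, real_inner_smul_left]
  rw [hξ]
  linarith

end IsPenaltyMinimizerSeq

end Penalty

section Stationarity

variable {n l : ℕ} {f : Eu n → ℝ} {F : Eu n → Eu l} {F' : Eu n → Eu n → Eu l}
  {Γ : Set (Eu l)} {x : Eu n}

theorem IsPenaltyMinimizerSeq.exists_frequently_norm_smul_sub_le {ρ : ℝ} {y : ℕ → Eu n}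
    {z : ℕ → Eu l} (h : IsPenaltyMinimizerSeq f F Γ x ρ y z) (hfx : DifferentiableAt ℝ f x)
    (hF' : IsDirDeriv F F') (hF : LocallyLipschitz F) (hx : F x ∈ Γ)
    (hC : critCone f F F' Γ x = {0}) {L : NNReal} (hf : LipschitzOnWith L f (closedBall x ρ))
    (hy : Tendsto y atTop (𝓝 x)) :
    ∃ C, ∃ᶠ k : ℕ in atTop, ‖((k : ℝ) + 1) • (F (y k) - z k)‖ ≤ C := by
  by_contra hbdd
  push Not at hbdd
  set lam : ℕ → Eu l := fun k => ((k : ℝ) + 1) • (F (y k) - z k)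
  have hlam : Tendsto (fun k => ‖lam k‖) atTop atTop :=
    tendsto_atTop.2 fun C => (hbdd C).mono fun k hk => hk.le
  obtain ⟨N, hN⟩ := eventually_atTop.1 (hbdd 0)
  have hyx : ∀ k ≥ N, y k ≠ x := fun k hk hyk => by
    have hest := h.norm_sub_mul_norm_smul_sub_le hx hf k
    have hlamk : 0 < ‖((k : ℝ) + 1) • (F (y k) - z k)‖ := hN k hk
    have hgap : 0 < ‖F (y k) - z k‖ := norm_pos_iff.2 fun h0 => by simp [h0] at hlamk
    rw [hyk, sub_self, norm_zero, mul_zero] at hest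
    rw [hyk] at hgap hlamk
    nlinarith [mul_pos hgap hlamk]
  have hquot : ∀ k ≥ N, ‖‖y k - x‖⁻¹ • (z k - F (y k))‖ ≤ 2 * L * ‖lam k‖⁻¹ := by
    intro k hk
    have hyk : 0 < ‖y k - x‖ := norm_sub_pos_iff.2 (hyx k hk)
    have hlamk : 0 < ‖lam k‖ := hN k hk
    calc ‖‖y k - x‖⁻¹ • (z k - F (y k))‖
        = ‖F (y k) - z k‖ * ‖lam k‖ / (‖lam k‖ * ‖y k - x‖) := by
          rw [norm_smul, norm_inv, norm_norm, norm_sub_rev (z k)]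
          field_simp
      _ ≤ 2 * L * ‖y k - x‖ / (‖lam k‖ * ‖y k - x‖) := by
          exact div_le_div_of_nonneg_right (h.norm_sub_mul_norm_smul_sub_le hx hf k)
            (by positivity)
      _ = 2 * L * ‖lam k‖⁻¹ := by field_simp
  have hshift := tendsto_add_atTop_nat N
  obtain ⟨d, hd0, hd⟩ := exists_ne_zero_mem_critCone hfx hF' hF hx
    (y := fun k => y (k + N)) (p := fun k => z (k + N)) (hy.comp hshift)
    (fun k => hyx _ (Nat.le_add_left N k))
    (fun k => (le_of_penalty_le (by positivity) (h.penalty_le hx _)).trans'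
      (le_add_of_nonneg_right (sq_nonneg _)))
    (fun k => (h.mem _).2.1)
    (squeeze_zero_norm (fun k => hquot _ (Nat.le_add_left N k))
      (by simpa using ((hlam.comp hshift).inv_tendsto_atTop.const_mul (2 * (L : ℝ)))))
  exact hd0 (by simpa [hC] using hd)

theorem IsPenaltyMinimizerSeq.neg_gradient_mem_scalSubdiff {ρ : ℝ} {y : ℕ → Eu n}
    {z : ℕ → Eu l} (h : IsPenaltyMinimizerSeq f F Γ x ρ y z) (hf : ContDiff ℝ 1 f)
    (hF : Continuous F) {K : NNReal} (hK : LipschitzOnWith K F (closedBall x ρ)) (hρ : 0 < ρ)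
    (hy : Tendsto y atTop (𝓝 x)) {M : ℕ → ℕ} (hM : Tendsto M atTop atTop) {lam : Eu l}
    (hlam : Tendsto (fun j => ((M j : ℝ) + 1) • (F (y (M j)) - z (M j))) atTop (𝓝 lam)) :
    -gradient f x ∈ scalSubdiff F lam x := by
  have hfd : Differentiable ℝ f := hf.differentiable one_ne_zero
  have hgrad : Continuous (gradient f) :=
    (InnerProductSpace.toDual ℝ (Eu n)).symm.continuous.comp (hf.continuous_fderiv one_ne_zero)
  have hyM := hy.comp hM
  -- Minimality in `y` gives approximate subgradients of `⟨λ_{M j}, F⟩`; passing to `⟨λ, F⟩`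
  -- costs `K ‖λ - λ_{M j}‖`, and `1 / (j + 1)` bounds the first-order remainder of `f`.
  refine mem_limSubdiff_of_approx (continuous_const.inner hF) hyM
    (ξk := fun j => -gradient f (y (M j)) - (2 : ℝ) • (y (M j) - x))
    (B := fun j => K * ‖lam - ((M j : ℝ) + 1) • (F (y (M j)) - z (M j))‖ + 1 / ((j : ℝ) + 1))
    (a := fun j => ((M j : ℝ) + 1) * K ^ 2 / 2 + 1) ?_ (fun j => by positivity) ?_
    (fun j => by positivity) ?_
  · simpa using ((hgrad.tendsto x).comp hyM).neg.sub ((hyM.sub_const x).const_smul (2 : ℝ))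
  · simpa using (((tendsto_const_nhds (x := lam)).sub hlam).norm.const_mul (K : ℝ)).add
      tendsto_one_div_add_atTop_nhds_zero_nat
  · filter_upwards [hyM.eventually (isOpen_ball.mem_nhds (mem_ball_self hρ))] with j hj
    have htaylor := (hasGradientAt_iff_isLittleO.1 (hfd (y (M j))).hasGradientAt).def
      (show (0 : ℝ) < 1 / ((j : ℝ) + 1) by positivity)
    filter_upwards [isOpen_ball.mem_nhds hj, htaylor] with w hw hwσ
    exact h.inner_lower_estimate hK (M j) lam (ball_subset_closedBall hw) hwσ

theorem mStat_of_critCone_eq_zero (hf : ContDiff ℝ 1 f) (hF' : IsDirDeriv F F')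
    (hF : LocallyLipschitz F) (hΓ : IsClosed Γ) (hx : F x ∈ Γ)
    (hC : critCone f F F' Γ x = {0}) : MStat f F Γ x := by
  have hfx : DifferentiableAt ℝ f x := hf.differentiable one_ne_zero x
  obtain ⟨K, sF, hsF, hKF⟩ := hF x
  obtain ⟨L, sf, hsf, hLf⟩ := hf.locallyLipschitz x
  obtain ⟨ρ, hρ, hball⟩ := nhds_basis_closedBall.mem_iff.1 (inter_mem (inter_mem hsF hsf)
    (eventually_lt_of_critCone_eq_zero hfx hF' hF hx hC))
  have hmin : ∀ y ∈ closedBall x ρ, F y ∈ Γ → y ≠ x → f x < f y := fun y hy => (hball hy).2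
  obtain ⟨y, z, hyz⟩ := exists_isPenaltyMinimizerSeq hf.continuous hF.continuous hΓ hx hρ.le
  have hy := hyz.tendsto_fst hf.continuous hF.continuous hΓ hx hmin
  have hz := hyz.tendsto_snd hf.continuous hF.continuous hΓ hx hmin
  obtain ⟨C, hCfreq⟩ := hyz.exists_frequently_norm_smul_sub_le hfx hF' hF hx hC
    (hLf.mono fun w hw => (hball hw).1.2) hy
  obtain ⟨φ₁, hφ₁, hφ₁C⟩ := extraction_of_frequently_atTop hCfreq
  obtain ⟨lam, -, φ₂, hφ₂, hlam⟩ := (isCompact_closedBall (0 : Eu l) C).tendsto_subseq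
    (x := fun j => ((φ₁ j : ℝ) + 1) • (F (y (φ₁ j)) - z (φ₁ j)))
    fun j => mem_closedBall_zero_iff.2 (hφ₁C j)
  have hM : Tendsto (φ₁ ∘ φ₂) atTop atTop := (hφ₁.comp hφ₂).tendsto_atTop
  refine ⟨lam, hyz.neg_gradient_mem_scalSubdiff hf hF.continuous
    (hKF.mono fun w hw => (hball hw).1.1) hρ hy hM hlam,
    mem_limNormal_of_tendsto hx (hz.comp hM) hlam ?_⟩
  filter_upwards [(hz.comp hM).eventually (isOpen_ball.mem_nhds (mem_ball_self one_pos))]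
    with j hj
  exact hyz.smul_sub_mem_regNormal hj

end Stationarity

theorem stmt16_general {n l : ℕ}
    (f : Eu n → ℝ) (hf : ContDiff ℝ 1 f)
    (F : Eu n → Eu l) (F' : Eu n → Eu n → Eu l)
    (hLip : LocallyLipschitz F) (hF' : IsDirDeriv F F')
    (Γ : Set (Eu l)) (hΓcl : IsClosed Γ)
    (x : Eu n) (hfeas : F x ∈ Γ)
    (hC : critCone f F F' Γ x = {0}) :
    (∃ U ∈ 𝓝 x, ∀ y ∈ (F ⁻¹' Γ) ∩ U, y ≠ x → f x < f y) ∧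
    MStat f F Γ x :=
  ⟨⟨_, eventually_lt_of_critCone_eq_zero ((hf.differentiable one_ne_zero) x) hF' hLip hfeas hC,
    fun _ hy => hy.2 hy.1⟩, mStat_of_critCone_eq_zero hf hF' hLip hΓcl hfeas hC⟩

/-- A feasible point with trivial explicit critical cone is a strict local minimizer
which is M-stationary. -/
theorem stmt16 {n l : ℕ}
    (f : Eu n → ℝ) (hf : ContDiff ℝ 1 f)
    (F : Eu n → Eu l) (F' : Eu n → Eu n → Eu l)
    (hLip : LocallyLipschitz F) (hF' : IsDirDeriv F F')
    (Γ : Set (Eu l)) (hΓne : Γ.Nonempty) (hΓcl : IsClosed Γ)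
    (x : Eu n) (hfeas : F x ∈ Γ)
    (hC : critCone f F F' Γ x = {0}) :
    (∃ U ∈ 𝓝 x, ∀ y ∈ (F ⁻¹' Γ) ∩ U, y ≠ x → f x < f y) ∧
    MStat f F Γ x :=
  stmt16_general f hf F F' hLip hF' Γ hΓcl x hfeas hC
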